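/- arXiv:1907.13154 — 9 statements merged into one kernel-verified Lean document; each statement's English description precedes it below -/
import Mathlib

section
/- A dual quaternion J = J₁ + ε J₂ satisfies J² = -1 if and only if J₁ is a purely imaginary unit quaternion (J₁² = -1, equivalently Re(J₁)=0 and |J₁|=1), J₂ is purely imaginary, and J₁ is orthogonal to J₂ (i.e., J₁J₂ᶜ + J₂J₁ᶜ = 0). -/
noncomputable section
open Polynomial TrivSqZeroExt

/-- The real quaternions ℍ. -/
abbrev Quat : Type := Quaternion ℝ
/-- The dual quaternions 𝔻ℍ = ℍ + εℍ, realized as dual numbers over ℍ. -/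
abbrev DH : Type := DualNumber Quat

/-- Dual quaternion conjugation hᶜ = h₁ᶜ + ε h₂ᶜ. -/
def dconj (h : DH) : DH := (star h.fst, star h.snd)
/-- The trace t(h) = h + hᶜ. -/
def tr (h : DH) : DH := h + dconj h
/-- The norm n(h) = h·hᶜ. -/
def nrm (h : DH) : DH := h * dconj h
/-- The inverse h₁⁻¹ - ε h₁⁻¹h₂h₁⁻¹ of a dual quaternion with nonzero primal part. -/
def dinv (h : DH) : DH := ((h.fst)⁻¹, -((h.fst)⁻¹ * h.snd * (h.fst)⁻¹))
/-- Orthogonality of two quaternions: p·qᶜ + q·pᶜ = 0. -/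
def orthQ (p q : Quat) : Prop := p * star q + q * star p = 0
/-- Membership in the quadratic cone Q_𝔻ℍ = ℝ ∪ {h₁+εh₂ : h₁∈ℍ\ℝ, h₂∈Im ℍ, h₁ ⊥ h₂}. -/
def inQC (h : DH) : Prop :=
  (∃ r : ℝ, h = algebraMap ℝ DH r) ∨
  (h.fst.im ≠ 0 ∧ h.snd.re = 0 ∧ orthQ h.fst h.snd)
/-- Right evaluation of a dual quaternionic polynomial: P(h) = Σ hⁿ aₙ. -/
def evalR (h : DH) (P : Polynomial DH) : DH := P.sum fun n a => h ^ n * a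
/-- Right evaluation of a quaternionic polynomial. -/
def evalRq (q : Quat) (P : Polynomial Quat) : Quat := P.sum fun n a => q ^ n * a
/-- Coefficientwise conjugation of a dual quaternionic polynomial. -/
def pconj (P : Polynomial DH) : Polynomial DH := P.sum fun n a => C (dconj a) * X ^ n
/-- Coefficientwise conjugation of a quaternionic polynomial. -/
def pconjQ (P : Polynomial Quat) : Polynomial Quat := P.sum fun n a => C (star a) * X ^ n
/-- The primal part of a polynomial over the dual quaternions. -/
def pprimal (P : Polynomial DH) : Polynomial Quat := P.map (fstHom ℝ Quat Quat).toRingHom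
/-- P has real coefficients, i.e. P ∈ ℝ[t] ⊆ 𝔻ℍ[t]. -/
def IsRealPoly (P : Polynomial DH) : Prop := ∀ n, ∃ r : ℝ, P.coeff n = algebraMap ℝ DH r
/-- P has real coefficients, i.e. P ∈ ℝ[t] ⊆ ℍ[t]. -/
def IsRealPolyQ (P : Polynomial Quat) : Prop := ∀ n, ∃ r : ℝ, P.coeff n = (r : Quat)
/-- P is a motion polynomial: N(P) = P·Pᶜ is real and the leading coefficient is invertible. -/
def IsMotion (P : Polynomial DH) : Prop := IsRealPoly (P * pconj P) ∧ (P.leadingCoeff).fst ≠ 0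


private theorem keyQ (a b : Quat) (h : a*a = -1) :
    a*b + b*a = 0 ↔ (b.re = 0 ∧ a * star b + b * star a = 0) := by
  simp only [Quaternion.ext_iff, Quaternion.re_mul, Quaternion.imI_mul, Quaternion.imJ_mul,
    Quaternion.imK_mul, Quaternion.re_add, Quaternion.imI_add, Quaternion.imJ_add,
    Quaternion.imK_add, Quaternion.re_neg, Quaternion.imI_neg, Quaternion.imJ_neg,
    Quaternion.imK_neg, Quaternion.re_one, Quaternion.imI_one, Quaternion.imJ_one,
    Quaternion.imK_one, Quaternion.re_zero, Quaternion.imI_zero, Quaternion.imJ_zero,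
    Quaternion.imK_zero, Quaternion.re_star, Quaternion.imI_star, Quaternion.imJ_star,
    Quaternion.imK_star] at *
  obtain ⟨w,x,y,z⟩ := a; obtain ⟨r,u,v,s⟩ := b
  dsimp only at *
  obtain ⟨h1,h2,h3,h4⟩ := h
  have hw : w = 0 := by nlinarith [sq_nonneg w, sq_nonneg x, sq_nonneg y, sq_nonneg z]
  subst hw
  constructor
  · rintro ⟨e1,e2,e3,e4⟩
    have hrx : r * x = 0 := by linarith
    have hry : r * y = 0 := by linarith
    have hrz : r * z = 0 := by linarith
    have hr : r = 0 := by linear_combination x*hrx + y*hry + z*hrz + r*h1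
    subst hr
    refine ⟨rfl, ?_, ?_, ?_, ?_⟩ <;> linarith
  · rintro ⟨hr, e1,e2,e3,e4⟩
    subst hr
    refine ⟨?_, ?_, ?_, ?_⟩ <;> linarith

private theorem mulEq (J : DH) :
    J * J = -1 ↔ (J.fst * J.fst = -1 ∧ J.fst * J.snd + J.snd * J.fst = 0) := by
  rw [TrivSqZeroExt.ext_iff]
  simp [fst_mul, snd_mul]

/-- J² = -1 iff the primal part squares to -1, the dual part is purely
imaginary, and the two parts are orthogonal. -/
theorem stmt3 (J : DH) :
    J * J = -1 ↔
      (J.fst * J.fst = -1 ∧ J.snd.re = 0 ∧ orthQ J.fst J.snd) := by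
  rw [mulEq]
  unfold orthQ
  constructor
  · rintro ⟨ha, hb⟩
    obtain ⟨h1, h2⟩ := (keyQ _ _ ha).mp hb
    exact ⟨ha, h1, h2⟩
  · rintro ⟨ha, h1, h2⟩
    exact ⟨ha, (keyQ _ _ ha).mpr ⟨h1, h2⟩⟩
end
end

section
/- The action of the group 𝔻ℍ^× of invertible dual quaternions on the set 𝕊_{𝔻ℍ} = {J ∈ 𝔻ℍ : J² = -1}, given by (h, J) ↦ h⁻¹ J h, is transitive. -/
noncomputable section
open Polynomial TrivSqZeroExt

section Aux

private lemma stmt6_re_zero (p : Quat) (h : p * p = -1) : p.re = 0 := by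
  have h1 := congrArg QuaternionAlgebra.re h
  have h2 := congrArg QuaternionAlgebra.imI h
  have h3 := congrArg QuaternionAlgebra.imJ h
  have h4 := congrArg QuaternionAlgebra.imK h
  simp [Quaternion.re_mul, Quaternion.imI_mul, Quaternion.imJ_mul, Quaternion.imK_mul,
    Quaternion.re_one, Quaternion.imI_one, Quaternion.imJ_one, Quaternion.imK_one]
    at h1 h2 h3 h4
  nlinarith [sq_nonneg p.imI, sq_nonneg p.imJ, sq_nonneg p.imK, sq_nonneg p.re]

private lemma stmt6_conj_exists (p q : Quat) (hp : p * p = -1) (hq : q * q = -1) :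
    ∃ u : Quat, u ≠ 0 ∧ p * u = u * q := by
  by_cases h : p * q = 1
  · have hq' : q = -p := by
      have h2 : p * p * q = p := by rw [mul_assoc, h, mul_one]
      rw [hp] at h2
      simp only [neg_one_mul] at h2
      rw [← h2, neg_neg]
    subst hq'
    have anti : ∀ w : Quat, p * (p*w - w*p) = (p*w - w*p) * (-p) := by
      intro w
      have h2 : p * (p*w - w*p) - (p*w - w*p) * (-p) = (p*p)*w - w*(p*p) := by noncomm_ring
      rw [hp] at h2
      have h3 : p * (p*w - w*p) - (p*w - w*p) * (-p) = 0 := by rw [h2]; noncomm_ring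
      exact sub_eq_zero.mp h3
    set i : Quat := ⟨0,1,0,0⟩ with hidef
    set j : Quat := ⟨0,0,1,0⟩ with hjdef
    by_cases hi : p * i - i * p ≠ 0
    · exact ⟨_, hi, anti _⟩
    · by_cases hj : p * j - j * p ≠ 0
      · exact ⟨_, hj, anti _⟩
      · exfalso
        push_neg at hi hj
        have hre := stmt6_re_zero p hp
        have hp0 : p = 0 := by
          have h2 := congrArg QuaternionAlgebra.imI hi
          have h3 := congrArg QuaternionAlgebra.imJ hi
          have h4 := congrArg QuaternionAlgebra.imK hi
          have h6 := congrArg QuaternionAlgebra.imI hj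
          have h7 := congrArg QuaternionAlgebra.imJ hj
          have h8 := congrArg QuaternionAlgebra.imK hj
          have hi0 : i.re = 0 ∧ i.imI = 1 ∧ i.imJ = 0 ∧ i.imK = 0 := ⟨rfl, rfl, rfl, rfl⟩
          have hj0 : j.re = 0 ∧ j.imI = 0 ∧ j.imJ = 1 ∧ j.imK = 0 := ⟨rfl, rfl, rfl, rfl⟩
          simp [hi0, hj0, Quaternion.re_mul, Quaternion.imI_mul, Quaternion.imJ_mul,
            Quaternion.imK_mul, Quaternion.imI_zero, Quaternion.imJ_zero, Quaternion.imK_zero]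
            at h2 h3 h4 h6 h7 h8
          exact Quaternion.ext p 0 (hre.trans rfl) (h8.trans rfl)
            ((by linarith : p.imJ = 0).trans rfl) (h3.trans rfl)
        rw [hp0] at hp
        simpa [Quaternion.re_one, Quaternion.re_zero] using congrArg QuaternionAlgebra.re hp
  · refine ⟨1 - p*q, ?_, ?_⟩
    · intro h0
      exact h (sub_eq_zero.mp h0).symm
    · have h2 : p * (1 - p*q) - (1 - p*q) * q = p - (p*p)*q - q + p*(q*q) := by noncomm_ring
      rw [hp, hq] at h2
      have h3 : p * (1 - p*q) - (1 - p*q) * q = 0 := by rw [h2]; noncomm_ring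
      exact sub_eq_zero.mp h3

private lemma stmt6_dinv_mul (h : DH) (hf : h.fst ≠ 0) : dinv h * h = 1 := by
  apply TrivSqZeroExt.ext
  · rw [fst_mul]; simp [dinv, fst_mul, inv_mul_cancel₀ hf]
  · rw [snd_mul]; simp only [dinv, snd_mul, fst_one, snd_one, smul_eq_mul, op_smul_eq_mul, fst_mk, snd_mk]
    simp [mul_assoc, inv_mul_cancel₀ hf]

end Aux

/-- the conjugation action of 𝔻ℍ^× on {J : J² = -1} is transitive. -/
theorem stmt6 (J K : DH) (hJ : J * J = -1) (hK : K * K = -1) :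
    ∃ h : DH, h.fst ≠ 0 ∧ dinv h * J * h = K := by
  -- notation
  set p : Quat := J.fst with hp'
  set d : Quat := J.snd with hd'
  set q : Quat := K.fst with hq'
  set e : Quat := K.snd with he'
  have hp2 : p * p = -1 := by
    have := congrArg TrivSqZeroExt.fst hJ
    simpa [fst_mul] using this
  have hq2 : q * q = -1 := by
    have := congrArg TrivSqZeroExt.fst hK
    simpa [fst_mul] using this
  have hpd : p * d + d * p = 0 := by
    have := congrArg TrivSqZeroExt.snd hJ
    simpa [snd_mul, smul_eq_mul, op_smul_eq_mul] using this
  have hqe : q * e + e * q = 0 := by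
    have := congrArg TrivSqZeroExt.snd hK
    simpa [snd_mul, smul_eq_mul, op_smul_eq_mul] using this
  obtain ⟨u, hu, hpu⟩ := stmt6_conj_exists p q hp2 hq2
  set d' : Quat := u⁻¹ * d * u with hd''
  have hud : u * d' = d * u := by
    rw [hd'', ← mul_assoc, ← mul_assoc, mul_inv_cancel₀ hu, one_mul]
  have hqd' : q * d' + d' * q = 0 := by
    have key : u * (q * d' + d' * q) = 0 := by
      calc u * (q * d' + d' * q) = (u * q) * d' + (u * d') * q := by noncomm_ring
        _ = (p * u) * d' + (d * u) * q := by rw [← hpu, hud]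
        _ = p * (u * d') + d * (u * q) := by noncomm_ring
        _ = p * (d * u) + d * (p * u) := by rw [hud, ← hpu]
        _ = (p * d + d * p) * u := by noncomm_ring
        _ = 0 := by rw [hpd, zero_mul]
    rcases mul_eq_zero.mp key with h0 | h0
    · exact absurd h0 hu
    · exact h0
  set x : Quat := e - d' with hx'
  have hqx : q * x + x * q = 0 := by
    have e1 : q * x + x * q = (q * e + e * q) - (q * d' + d' * q) := by
      rw [hx']; noncomm_ring
    rw [e1, hqe, hqd', sub_zero]
  have hxq : x * q = -(q * x) := by
    have := hqx
    linear_combination (norm := noncomm_ring) this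
  have hqxq : q * x * q = x := by
    rw [mul_assoc, hxq, mul_neg, ← mul_assoc, hq2, neg_one_mul, neg_neg]
  set b : Quat := -((2⁻¹ : ℝ) • (q * x)) with hb'
  have hcomm : q * b - b * q = x := by
    have e1 : q * b = (2⁻¹ : ℝ) • x := by
      rw [hb', mul_neg, mul_smul_comm, ← mul_assoc, hq2, neg_one_mul, smul_neg, neg_neg]
    have e2 : b * q = -((2⁻¹ : ℝ) • x) := by
      rw [hb', neg_mul, smul_mul_assoc, hqxq]
    rw [e1, e2, sub_neg_eq_add, ← add_smul]
    norm_num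
  set hh : DH := (u, u * b) with hhdef
  refine ⟨hh, hu, ?_⟩
  have hmain : J * hh = hh * K := by
    apply TrivSqZeroExt.ext
    · rw [fst_mul, fst_mul]; exact hpu
    · simp only [snd_mul, smul_eq_mul, op_smul_eq_mul, fst_mk, snd_mk, ← hp', ← hd', ← hq', ← he']
      show p * (u * b) + d * u = u * e + u * b * q
      have e1 : p * (u * b) = u * (q * b) := by rw [← mul_assoc, hpu, mul_assoc]
      have e2 : u * b * q = u * (b * q) := by rw [mul_assoc]
      rw [e1, e2, ← hud]
      have e3 : u * (q * b) + u * d' - (u * e + u * (b * q)) = u * ((q * b - b * q) - (e - d')) := by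
        noncomm_ring
      have e4 : u * (q * b) + u * d' - (u * e + u * (b * q)) = 0 := by
        rw [e3, hcomm, ← hx', sub_self, mul_zero]
      linear_combination (norm := noncomm_ring) e4
  calc dinv hh * J * hh
      = dinv hh * (J * hh) := by rw [mul_assoc]
    _ = dinv hh * (hh * K) := by rw [hmain]
    _ = (dinv hh * hh) * K := by rw [mul_assoc]
    _ = K := by rw [stmt6_dinv_mul hh hu, one_mul]
end
end

section
/- Define 𝒞(h,l) = h⁻¹ l h if h is invertible, 𝒞(h,l) = h₂⁻¹ l h₂ if h = ε h₂ with h₂ ≠ 0, and 𝒞(0,l) = l. Then for all dual quaternions h and l, the identity h · 𝒞(h,l) = l · h holds. -/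
noncomputable section
open Polynomial TrivSqZeroExt

/-- The embedding ℍ → 𝔻ℍ. -/
def inlQ (q : Quat) : DH := (q, (0 : Quat))

open scoped Classical in
/-- The extended conjugation map 𝒞: h⁻¹lh if h is invertible, h₂⁻¹lh₂ if h = εh₂ ≠ 0,
and l if h = 0. -/
def Cmap (h l : DH) : DH :=
  if h.fst ≠ 0 then dinv h * l * h
  else if h = 0 then l
  else inlQ (h.snd)⁻¹ * l * inlQ h.snd

/-- for all dual quaternions h and l, h · 𝒞(h,l) = l · h. -/
theorem stmt7 (h l : DH) : h * Cmap h l = l * h := by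
  classical
  unfold Cmap
  by_cases h1 : h.fst ≠ 0
  · rw [if_pos h1]
    have hinv : h * dinv h = 1 := by
      refine TrivSqZeroExt.ext ?_ ?_
      · change fst h * (fst h)⁻¹ = 1
        simp [dinv, mul_inv_cancel₀ h1]
      · change fst h * -((fst h)⁻¹ * snd h * (fst h)⁻¹) + snd h * (fst h)⁻¹ = 0
        simp only [dinv, snd_mul, fst_mk, snd_mk, smul_eq_mul,
          op_smul_eq_mul, snd_one, mul_neg, mul_assoc]
        rw [← mul_assoc (fst h), mul_inv_cancel₀ h1, one_mul]
        simp
    rw [show h * (dinv h * l * h) = (h * dinv h) * l * h by simp [mul_assoc], hinv, one_mul]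
  · rw [if_neg h1]
    push_neg at h1
    by_cases h0 : h = 0
    · simp [h0]
    · rw [if_neg h0]
      have h2 : h.snd ≠ 0 := by
        intro hs
        exact h0 (TrivSqZeroExt.ext h1 hs)
      refine TrivSqZeroExt.ext ?_ ?_
      · simp [inlQ, h1]
      · simp only [inlQ, snd_mul, fst_mul, h1]
        simp [h1, ← mul_assoc, mul_inv_cancel₀ h2]
        change snd h * ((snd h)⁻¹ * fst l * snd h) = fst l * snd h
        simp [← mul_assoc, mul_inv_cancel₀ h2]
end
end

section
/- Let h be a dual quaternion and define Δ_h(t) = (t - h)·(t - hᶜ) = t² - t·t(h) + n(h) in 𝔻ℍ[t]. Then Δ_h(t) has real coefficients if and only if h belongs to (ℝ + ε·Im(ℍ)) ∪ Q_{𝔻ℍ}, where Q_{𝔻ℍ} = ℝ ∪ {h₁ + ε h₂ : h₁ ∈ ℍ\ℝ, h₂ ∈ Im(ℍ), h₁ ⊥ h₂} is the quadratic cone. -/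
noncomputable section
open Polynomial TrivSqZeroExt

/-- The characteristic polynomial Δ_h(t) = t² - t·t(h) + n(h). -/
def Δpoly (h : DH) : Polynomial DH := X ^ 2 - C (tr h) * X + C (nrm h)

lemma real_iff (x : DH) : (∃ r : ℝ, x = algebraMap ℝ DH r) ↔ (x.fst.im = 0 ∧ x.snd = 0) := by
  constructor
  · rintro ⟨r, rfl⟩
    constructor
    · show Quaternion.im ((r : Quat)) = 0
      ext <;> simp
    · rfl
  · rintro ⟨h1, h2⟩
    refine ⟨x.fst.re, ?_⟩
    have hx : x.fst = ((x.fst.re : ℝ) : Quat) := by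
      have := Quaternion.re_add_im x.fst
      rw [h1, add_zero] at this
      exact this.symm
    have hf : (algebraMap ℝ DH x.fst.re) = (((x.fst.re : ℝ) : Quat), (0 : Quat)) := rfl
    rw [hf]
    exact TrivSqZeroExt.ext hx h2

lemma star_add_self_eq_zero (q : Quat) : q + star q = 0 ↔ q.re = 0 := by
  constructor
  · intro hq
    have := congrArg (fun x : Quat => x.re) hq
    simp at this
    change q.re + q.re = 0 at this
    linarith [this]
  · intro hq
    ext <;> simp [hq] <;> rfl

lemma key (h : DH) :
    IsRealPoly (Δpoly h) ↔ (h.snd.re = 0 ∧ orthQ h.fst h.snd) := by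
  have c0 : (Δpoly h).coeff 0 = nrm h := by simp [Δpoly]
  have c1 : (Δpoly h).coeff 1 = -(tr h) := by simp [Δpoly]
  have trsnd : (tr h).snd = h.snd + star h.snd := rfl
  have nfstim : (nrm h).fst.im = 0 := by
    show (h.fst * star h.fst).im = 0
    rw [Quaternion.mul_star_eq_coe]; ext <;> simp <;> rfl
  have nsnd : (nrm h).snd = h.fst * star h.snd + h.snd * star h.fst := by
    show (h * dconj h).snd = _
    rw [TrivSqZeroExt.snd_mul]
    show h.fst • star h.snd + MulOpposite.op (star h.fst) • h.snd = _
    rw [smul_eq_mul, op_smul_eq_mul]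
  constructor
  · intro H
    obtain ⟨r0, hr0⟩ := H 0
    rw [c0] at hr0
    have H0 := (real_iff _).mp ⟨r0, hr0⟩
    obtain ⟨r1, hr1⟩ := H 1
    rw [c1] at hr1
    have H1 := (real_iff _).mp ⟨-r1, by rw [map_neg, ← hr1, neg_neg]⟩
    refine ⟨?_, ?_⟩
    · have := H1.2
      rw [trsnd] at this
      exact (star_add_self_eq_zero _).mp this
    · have := H0.2
      rw [nsnd] at this
      exact this
  · rintro ⟨hre, horth⟩
    intro n
    match n with
    | 0 =>
      rw [c0]
      exact (real_iff _).mpr ⟨nfstim, by rw [nsnd]; exact horth⟩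
    | 1 =>
      rw [c1]
      refine (real_iff _).mpr ⟨?_, ?_⟩
      · show Quaternion.im (-(h.fst + star h.fst)) = 0
        ext <;> simp
      · show -(h.snd + star h.snd) = 0
        rw [(star_add_self_eq_zero _).mpr hre, neg_zero]
    | 2 =>
      refine ⟨1, ?_⟩
      simp [Δpoly, coeff_X_pow]
    | (n+3) => exact ⟨0, by simp [Δpoly, coeff_X_pow]⟩

/-- Δ_h has real coefficients iff h ∈ (ℝ + ε Im ℍ) ∪ Q_𝔻ℍ. -/
theorem stmt12 (h : DH) :
    IsRealPoly (Δpoly h) ↔ ((h.fst.im = 0 ∧ h.snd.re = 0) ∨ inQC h) := by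
  rw [key]
  constructor
  · rintro ⟨hre, horth⟩
    by_cases him : h.fst.im = 0
    · exact Or.inl ⟨him, hre⟩
    · exact Or.inr (Or.inr ⟨him, hre, horth⟩)
  · rintro (⟨him, hre⟩ | ⟨r, hr⟩ | ⟨_, hre, horth⟩)
    · refine ⟨hre, ?_⟩
      have hf : h.fst = ((h.fst.re : ℝ) : Quat) := by
        have := Quaternion.re_add_im h.fst
        rw [him, add_zero] at this
        exact this.symm
      show h.fst * star h.snd + h.snd * star h.fst = 0
      rw [hf]
      have : star h.snd + h.snd = 0 := by
        rw [add_comm]; exact (star_add_self_eq_zero _).mpr hre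
      calc ((h.fst.re : ℝ) : Quat) * star h.snd + h.snd * star ((h.fst.re : ℝ) : Quat)
          = ((h.fst.re : ℝ) : Quat) * (star h.snd + h.snd) := by
            simp [mul_add, Quaternion.star_coe, ← Quaternion.coe_commutes]
        _ = 0 := by rw [this, mul_zero]
    · subst hr
      constructor
      · show (0 : Quat).re = 0; rfl
      · show ((r : Quat), (0:Quat)).fst * star ((r : Quat), (0:Quat)).snd
            + ((r : Quat), (0:Quat)).snd * star ((r : Quat), (0:Quat)).fst = 0
        simp
    · exact ⟨hre, horth⟩
end
end

section
/- The quadratic cone Q_{𝔻ℍ} = ℝ ∪ {h ∈ 𝔻ℍ : t(h), n(h) ∈ ℝ and 4n(h) > t(h)²} equals, in coordinates h = r₀ + r₁i + r₂j + r₃k + ε(r₄ + r₅i + r₆j + r₇k), the set determined by the conditions r₄ = 0, r₁r₅ + r₂r₆ + r₃r₇ = 0, and r₁² + r₂² + r₃² ≠ 0, together with the real axis. -/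
noncomputable section
open Polynomial TrivSqZeroExt

theorem key_s13 (x : DH) (r : ℝ) : x = algebraMap ℝ DH r ↔
    (x.fst.re = r ∧ x.fst.imI = 0 ∧ x.fst.imJ = 0 ∧ x.fst.imK = 0 ∧
     x.snd.re = 0 ∧ x.snd.imI = 0 ∧ x.snd.imJ = 0 ∧ x.snd.imK = 0) := by
  rw [TrivSqZeroExt.ext_iff]
  simp [Quaternion.ext_iff, TrivSqZeroExt.algebraMap_eq_inl]
  tauto

theorem tr_fst (h : DH) : (tr h).fst = h.fst + star h.fst := rfl
theorem tr_snd (h : DH) : (tr h).snd = h.snd + star h.snd := rfl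
theorem nrm_fst (h : DH) : (nrm h).fst = h.fst * star h.fst := rfl
theorem nrm_snd (h : DH) : (nrm h).snd = h.fst * star h.snd + h.snd * star h.fst := by
  simp [nrm, dconj, TrivSqZeroExt.snd_mul]
  rfl

/-- Cartesian description of the quadratic cone
Q_𝔻ℍ = ℝ ∪ {h : t(h), n(h) ∈ ℝ, 4n(h) > t(h)²}. -/
theorem stmt13 (h : DH) :
    ((∃ r : ℝ, h = algebraMap ℝ DH r) ∨
      (∃ a b : ℝ, tr h = algebraMap ℝ DH a ∧ nrm h = algebraMap ℝ DH b ∧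
        4 * b > a ^ 2)) ↔
    ((h.snd.re = 0 ∧
        h.fst.imI * h.snd.imI + h.fst.imJ * h.snd.imJ + h.fst.imK * h.snd.imK = 0 ∧
        ¬(h.fst.imI = 0 ∧ h.fst.imJ = 0 ∧ h.fst.imK = 0)) ∨
      (∃ r : ℝ, h = algebraMap ℝ DH r)) := by
  simp only [key_s13, tr_fst, tr_snd, nrm_fst, nrm_snd]
  simp [TrivSqZeroExt.snd_mul]
  generalize (TrivSqZeroExt.fst h).re = p0
  generalize (TrivSqZeroExt.fst h).imI = p1
  generalize (TrivSqZeroExt.fst h).imJ = p2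
  generalize (TrivSqZeroExt.fst h).imK = p3
  generalize (TrivSqZeroExt.snd h).re = s0
  generalize (TrivSqZeroExt.snd h).imI = s1
  generalize (TrivSqZeroExt.snd h).imJ = s2
  generalize (TrivSqZeroExt.snd h).imK = s3
  constructor
  · rintro (⟨h1, h2, h3, h4, h5, h6, h7⟩ | ⟨hs0, ⟨e1, e2, e3, e4, e5, e6, e7⟩, hineq⟩)
    · right; tauto
    · left
      subst hs0
      refine ⟨rfl, by linear_combination e4 / 2, ?_⟩
      intro h1 h2 h3
      nlinarith [hineq]
  · rintro (⟨hs0, horth, hnz⟩ | ⟨h1, h2, h3, h4, h5, h6, h7⟩)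
    · right
      subst hs0
      refine ⟨rfl,
        ⟨by ring, by ring, by ring, by linear_combination 2 * horth, by ring, by ring, by ring⟩, ?_⟩
      have hpos : 0 < p1 * p1 + p2 * p2 + p3 * p3 := by
        rcases eq_or_ne p1 0 with rfl | hp1
        · rcases eq_or_ne p2 0 with rfl | hp2
          · rcases eq_or_ne p3 0 with rfl | hp3
            · exact absurd rfl (hnz rfl rfl)
            · nlinarith [mul_self_pos.2 hp3]
          · nlinarith [mul_self_pos.2 hp2, mul_self_nonneg p3]
        · nlinarith [mul_self_pos.2 hp1, mul_self_nonneg p2, mul_self_nonneg p3]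
      nlinarith
    · left; tauto
end
end

section
/- Let f = a + Im(·) b be an affine slice function on a sphere 𝕊ₓ = α + β𝕊_{𝔻ℍ} (α, β ∈ ℝ, β > 0), i.e., f(α + βJ) = a + Jb for fixed dual quaternions a, b and all J with J² = -1. Suppose b lies in εℍ\{0} (a zero divisor) and f has a zero y = α + βJ₀ in 𝕊ₓ. Then a ∈ εℍ\{0} and the zero set of f in 𝕊ₓ is exactly the tangent plane T_{y₁} = {y₁ + εγ : γ ∈ Im(ℍ), γ ⊥ Im(y₁)}, where y₁ is the primal part of y. -/
noncomputable section
open Polynomial TrivSqZeroExt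

lemma sq_neg_one_re {p : Quat} (hp : p * p = -1) : p.re = 0 := by
  rw [Quaternion.ext_iff] at hp
  simp [Quaternion.re_mul, Quaternion.imI_mul, Quaternion.imJ_mul, Quaternion.imK_mul, Quaternion.re_one, Quaternion.imI_one,
    Quaternion.imJ_one, Quaternion.imK_one] at hp
  obtain ⟨h1, h2, h3, h4⟩ := hp
  by_contra h
  have hI : p.imI = 0 := by
    have : p.re * p.imI = 0 := by linarith
    exact (mul_eq_zero.1 this).resolve_left h
  have hJ : p.imJ = 0 := by
    have : p.re * p.imJ = 0 := by linarith
    exact (mul_eq_zero.1 this).resolve_left h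
  have hK : p.imK = 0 := by
    have : p.re * p.imK = 0 := by linarith
    exact (mul_eq_zero.1 this).resolve_left h
  rw [hI, hJ, hK] at h1
  nlinarith [mul_self_nonneg p.re]

lemma sq_neg_one_ne {p : Quat} (hp : p * p = -1) : p ≠ 0 := by
  intro h; rw [h] at hp; simp at hp

lemma key_s14 {p s : Quat} (hp : p * p = -1) (h : p * s + s * p = 0) :
    s.re = 0 ∧ orthQ s p := by
  have hre : p.re = 0 := sq_neg_one_re hp
  have hstar : star p = -p := Quaternion.star_eq_neg.2 hre
  have hdecomp : p * s + s * p = ((2 * (p * s).re : ℝ) : Quat) + ((2 * s.re : ℝ) : Quat) * p := by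
    have h1 : p * s + star (p * s) = ((2 * (p * s).re : ℝ) : Quat) := Quaternion.self_add_star' _
    have h2 : star (p * s) = -(star s * p) := by rw [star_mul, hstar, mul_neg]
    have h3 : (s + star s) * p = ((2 * s.re : ℝ) : Quat) * p := by
      rw [Quaternion.self_add_star']
    calc p * s + s * p = (p * s + star (p * s)) + (s + star s) * p := by
          rw [h2]; noncomm_ring
      _ = _ := by rw [h1, h3]
  have hc : (2 * (p * s).re : ℝ) = 0 := by
    have := congrArg QuaternionAlgebra.re (hdecomp.symm.trans h)
    simpa [Quaternion.re_mul, hre, Quaternion.re_zero] using this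
  have h' := hdecomp.symm.trans h
  rw [hc] at h'
  have hs : ((2 * s.re : ℝ) : Quat) * p = 0 := by simpa using h'
  have hsre : s.re = 0 := by
    rcases mul_eq_zero.1 hs with h'' | h''
    · have : (2 * s.re : ℝ) = 0 := by
        have := congrArg QuaternionAlgebra.re h''
        simpa [Quaternion.re_zero] using this
      linarith
    · exact absurd h'' (sq_neg_one_ne hp)
  refine ⟨hsre, ?_⟩
  unfold orthQ
  rw [hstar, Quaternion.star_eq_neg.2 hsre, mul_neg, mul_neg, ← neg_add, neg_eq_zero,
    add_comm]
  exact h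

lemma im_eq {p : Quat} (hre : p.re = 0) (α β : ℝ) : ((α : Quat) + β • p).im = β • p := by
  ext <;> simp [hre]

lemma orth_smul {p s : Quat} (β : ℝ) (h : orthQ s p) : orthQ (β • s) (β • p) := by
  unfold orthQ at *
  simp only [Quaternion.star_smul]
  rw [smul_mul_assoc, smul_mul_assoc, mul_smul_comm, mul_smul_comm, smul_smul, smul_smul,
    ← smul_add, h, smul_zero]


/-- for an affine slice function f(α+βJ) = a + Jb on 𝕊ₓ with b a zero
divisor and a zero y = α + βJ₀, the spherical value a is a zero divisor and the zero
set of f in 𝕊ₓ is exactly the tangent plane T_{y₁}. -/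
theorem stmt14 (α β : ℝ) (hβ : 0 < β) (a b : DH)
    (hb0 : b ≠ 0) (hbp : b.fst = 0)
    (J₀ : DH) (hJ₀ : J₀ * J₀ = -1) (hzero : a + J₀ * b = 0) :
    (a ≠ 0 ∧ a.fst = 0) ∧
    (∀ J : DH, J * J = -1 →
      (a + J * b = 0 ↔
        ∃ γ : Quat, γ.re = 0 ∧ orthQ γ (((α : Quat) + β • J₀.fst).im) ∧
          (algebraMap ℝ DH α + algebraMap ℝ DH β * J : DH)
            = ((((α : Quat) + β • J₀.fst), γ) : DH))) := by
  set p := J₀.fst with hpdef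
  set u := b.snd with hudef
  have hp : p * p = -1 := by
    have := congrArg fst hJ₀
    simpa using this
  have hre : p.re = 0 := sq_neg_one_re hp
  have hu : u ≠ 0 := by
    intro h
    exact hb0 (TrivSqZeroExt.ext hbp h)
  have hafst : a.fst = 0 := by
    have := congrArg fst hzero
    simpa [hbp] using this
  have hasnd : a.snd = -(p * u) := by
    have := congrArg snd hzero
    simp [hbp, hafst] at this
    linear_combination (norm := module) this
  have ha0 : a ≠ 0 := by
    intro h
    rw [h] at hasnd
    have : p * u = 0 := by simpa using hasnd.symm
    rcases mul_eq_zero.1 this with h' | h'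
    · exact sq_neg_one_ne hp h'
    · exact hu h'
  refine ⟨⟨ha0, hafst⟩, ?_⟩
  intro J hJ
  set q := J.fst with hqdef
  set s := J.snd with hsdef
  have hq : q * q = -1 := by
    have := congrArg fst hJ
    simpa using this
  have hqs : q * s + s * q = 0 := by
    have := congrArg snd hJ
    simpa [smul_eq_mul, op_smul_eq_mul] using this
  -- the zero condition is equivalent to q = p
  have hiff : a + J * b = 0 ↔ q = p := by
    constructor
    · intro h
      have := congrArg snd h
      simp [hbp, hasnd] at this
      have h2 : (q - p) * u = 0 := by
        rw [sub_mul]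
        linear_combination (norm := noncomm_ring) this
      rcases mul_eq_zero.1 h2 with h' | h'
      · exact sub_eq_zero.1 h'
      · exact absurd h' hu
    · intro h
      refine TrivSqZeroExt.ext ?_ ?_
      · simpa [hbp] using hafst
      · have h' : fst J = p := h
        simp [hbp, hasnd, h', hudef]
  rw [hiff]
  constructor
  · intro h
    obtain ⟨hsre, horth⟩ := key_s14 hp (by rw [← h]; exact hqs)
    refine ⟨β • s, by simp [hsre], ?_, ?_⟩
    · rw [im_eq hre]
      exact orth_smul β horth
    · refine TrivSqZeroExt.ext ?_ ?_
      · have h' : fst J = p := h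
        simp [algebraMap_eq_inl', Algebra.smul_def, h']
      · simp [algebraMap_eq_inl', Algebra.smul_def, hsdef]
  · rintro ⟨γ, -, -, heq⟩
    have := congrArg fst heq
    simp [algebraMap_eq_inl'] at this
    have h2 : (β : Quat) * q = (β : Quat) * p := by
      rw [Quaternion.coe_mul_eq_smul β p]
      linear_combination (norm := noncomm_ring) this
    have hβ' : (β : Quat) ≠ 0 := by
      intro hc
      have := congrArg QuaternionAlgebra.re hc
      simp at this
      exact hβ.ne' this
    exact mul_left_cancel₀ hβ' h2
end
end

section
/- Fix α, β ∈ ℝ with β > 0 and dual quaternions a, b. Define f(α+βJ) = a + Jb and N(f)(α+βJ) = n(a) - n(b) + J t(abᶜ) for J ∈ 𝕊_{𝔻ℍ}. If N(f)(α+βI) = 0 for some I ∈ 𝕊_{𝔻ℍ}, then n(a) - n(b) = 0 and t(abᶜ) = 0, and hence N(f) vanishes identically on α + β𝕊_{𝔻ℍ} (the zero set of N(f) is circular). -/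
noncomputable section
open Polynomial TrivSqZeroExt

@[simp] lemma fst_pair (x y : Quat) : TrivSqZeroExt.fst ((x, y) : DH) = x := rfl
@[simp] lemma snd_pair (x y : Quat) : TrivSqZeroExt.snd ((x, y) : DH) = y := rfl

lemma key_s16 (r s : ℝ) (I1 : Quat) (hI : I1 * I1 = -1)
    (h : (r : Quat) + I1 * (s : Quat) = 0) : r = 0 ∧ s = 0 := by
  rcases eq_or_ne s 0 with hs | hs
  · subst hs
    simp only [Quaternion.coe_zero, mul_zero, add_zero] at h
    exact ⟨Quaternion.coe_injective (by simpa using h), rfl⟩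
  · exfalso
    have h1 : I1 * (s : Quat) = -(r : Quat) := eq_neg_of_add_eq_zero_right h
    have hI1 : I1 = ((-r / s : ℝ) : Quat) := by
      have h2 := congrArg (· * ((s⁻¹ : ℝ) : Quat)) h1
      simp only [mul_assoc, ← Quaternion.coe_mul, mul_inv_cancel₀ hs,
        Quaternion.coe_one, mul_one, ← Quaternion.coe_neg] at h2
      rw [h2]
      norm_num [div_eq_mul_inv]
    rw [hI1, ← Quaternion.coe_mul, show (-1 : Quat) = ((-1 : ℝ) : Quat) by norm_num] at hI
    have h3 : (-r / s) * (-r / s) = -1 := Quaternion.coe_injective hI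
    nlinarith [sq_nonneg (r / s)]

lemma nrm_real (h : DH) : ∃ r s : ℝ, nrm h = ((r : Quat), (s : Quat)) := by
  refine ⟨Quaternion.normSq h.fst, 2 * (h.fst * star h.snd).re, ?_⟩
  refine TrivSqZeroExt.ext ?_ ?_
  · exact (show h.fst * star h.fst = _ from Quaternion.self_mul_star _)
  · show TrivSqZeroExt.snd (h * dconj h) = _
    rw [DualNumber.snd_mul]
    simp only [dconj, fst_pair, snd_pair]
    rw [show TrivSqZeroExt.snd h * star h.fst = star (h.fst * star h.snd) by
      rw [star_mul, star_star]]
    exact (h.fst * star h.snd).self_add_star'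

lemma tr_real (h : DH) : ∃ r s : ℝ, tr h = ((r : Quat), (s : Quat)) := by
  refine ⟨2 * h.fst.re, 2 * h.snd.re, ?_⟩
  refine TrivSqZeroExt.ext ?_ ?_
  · simp only [tr, dconj, fst_add, fst_pair, snd_pair]
    exact h.fst.self_add_star'
  · simp only [tr, dconj, snd_add, fst_pair, snd_pair]
    exact h.snd.self_add_star'

/-- if the normal function N(f)(α+βJ) = n(a) - n(b) + J·t(abᶜ) vanishes
at one imaginary unit, then n(a) = n(b), t(abᶜ) = 0, and N(f) vanishes on the whole
sphere α + β𝕊_𝔻ℍ. -/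
theorem stmt16 (α β : ℝ) (hβ : 0 < β) (a b : DH)
    (I : DH) (hI : I * I = -1)
    (h0 : nrm a - nrm b + I * tr (a * dconj b) = 0) :
    (nrm a - nrm b = 0 ∧ tr (a * dconj b) = 0) ∧
    (∀ J : DH, J * J = -1 → nrm a - nrm b + J * tr (a * dconj b) = 0) := by
  obtain ⟨ra, sa, ha⟩ := nrm_real a
  obtain ⟨rb, sb, hb⟩ := nrm_real b
  obtain ⟨rt, st, ht⟩ := tr_real (a * dconj b)
  have hIfst : I.fst * I.fst = -1 := by
    have := congrArg TrivSqZeroExt.fst hI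
    simpa using this
  have h0f : ((ra - rb : ℝ) : Quat) + I.fst * (rt : Quat) = 0 := by
    have h2 := congrArg TrivSqZeroExt.fst h0
    rw [ha, hb, ht] at h2
    simp only [fst_add, fst_sub, fst_mul, fst_pair, fst_zero] at h2
    push_cast
    exact h2
  obtain ⟨hr1, hs1⟩ := key_s16 _ _ _ hIfst h0f
  have h0s : ((sa - sb : ℝ) : Quat) + I.fst * (st : Quat) = 0 := by
    have h2 := congrArg TrivSqZeroExt.snd h0
    rw [ha, hb, ht] at h2
    simp only [snd_add, snd_sub, DualNumber.snd_mul, fst_pair, snd_pair, snd_zero,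
      hs1, Quaternion.coe_zero, mul_zero, add_zero] at h2
    have h3 : ((sa : Quat) - sb) + (I.fst * st + I.snd * (0 : Quat)) = 0 := h2
    rw [mul_zero, add_zero] at h3
    push_cast
    exact h3
  obtain ⟨hr2, hs2⟩ := key_s16 _ _ _ hIfst h0s
  have hnrm : nrm a - nrm b = 0 := by
    rw [ha, hb, show ra = rb by linarith, show sa = sb by linarith]
    exact sub_self _
  have htr : tr (a * dconj b) = 0 := by
    rw [ht, hs1, hs2]
    refine TrivSqZeroExt.ext ?_ ?_ <;> simp
  exact ⟨⟨hnrm, htr⟩, fun J _ => by rw [hnrm, htr]; simp⟩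
end
end

section
/- Let P(t) ∈ 𝔻ℍ[t] and y₁ ∈ ℝ. Suppose (t - y₁)² divides N(P)(t) = P(t)·Pᶜ(t), the real point y₁ is a simple root of primal(P)(t) (i.e., (t - y₁) divides primal(P)(t) but (t - y₁)² does not). Then P(t) has a unique root h in the set y₁ + εℍ, this root satisfies h ∈ y₁ + ε·Im(ℍ), and (t - h) divides P(t) on the left in 𝔻ℍ[t]. -/
set_option maxHeartbeats 1000000
set_option synthInstance.maxHeartbeats 200000


noncomputable section
open Polynomial TrivSqZeroExt

namespace Stmt17Aux

/-! generic division lemmas -/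

lemma evalR_add (h : DH) (P Q : Polynomial DH) :
    evalR h (P + Q) = evalR h P + evalR h Q := by
  unfold evalR
  rw [Polynomial.sum_add_index] <;> intros <;> simp [mul_add]

lemma evalR_monomial (h : DH) (n : ℕ) (a : DH) :
    evalR h (monomial n a) = h ^ n * a := by
  unfold evalR; rw [Polynomial.sum_monomial_index]; simp

lemma key_div {R : Type*} [Ring R] (h : R) (P : R[X]) :
    ∃ Q : R[X], P = (X - C h) * Q + C (P.sum fun n a => h ^ n * a) := by
  induction P using Polynomial.induction_on' with
  | add p q hp hq =>
    obtain ⟨Qp, hQp⟩ := hp; obtain ⟨Qq, hQq⟩ := hq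
    refine ⟨Qp + Qq, ?_⟩
    rw [Polynomial.sum_add_index _ _ _ (by simp) (fun a b c => by rw [mul_add]),
      C_add, mul_add]
    conv_lhs => rw [hQp, hQq]
    rw [add_add_add_comm]
  | monomial n a =>
    obtain ⟨G, hG⟩ : (X - C h) ∣ (X ^ n - C h ^ n) :=
      (Polynomial.commute_X (C h)).sub_dvd_pow_sub_pow n
    refine ⟨G * C a, ?_⟩
    rw [Polynomial.sum_monomial_index _ _ (by simp)]
    rw [← mul_assoc, ← hG, sub_mul, sub_add_eq_add_sub]
    rw [← C_pow, ← C_mul, ((Polynomial.commute_X (C a)).pow_left n).eq,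
      C_mul_X_pow_eq_monomial, add_sub_cancel_right]

lemma root_factor {R : Type*} [Ring R] (h : R) (P : R[X])
    (h0 : (P.sum fun n a => h ^ n * a) = 0) : ∃ Q, P = (X - C h) * Q := by
  obtain ⟨Q, hQ⟩ := key_div h P
  exact ⟨Q, by rwa [h0, map_zero, add_zero] at hQ⟩

lemma ev_eq_sum (y : ℝ) (Q : Polynomial Quat) :
    eval₂ (RingHom.id Quat) ((y : Quat)) Q = Q.sum fun n a => ((y : Quat)) ^ n * a := by
  rw [eval₂_eq_sum]
  refine Finset.sum_congr rfl fun n _ => ?_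
  exact (((Quaternion.coe_commute y _).pow_left n).eq).symm

lemma ev_root (y : ℝ) (Q : Polynomial Quat)
    (h0 : eval₂ (RingHom.id Quat) ((y : Quat)) Q = 0) :
    (X - C ((y : Quat))) ∣ Q := by
  obtain ⟨W, hW⟩ := root_factor ((y : Quat)) Q (by rw [← ev_eq_sum, h0])
  exact ⟨W, hW⟩

lemma ev_mul (y : ℝ) (A B : Polynomial Quat) :
    eval₂ (RingHom.id Quat) ((y : Quat)) (A * B) =
      eval₂ (RingHom.id Quat) ((y : Quat)) A * eval₂ (RingHom.id Quat) ((y : Quat)) B :=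
  eval₂_mul_noncomm _ _ fun k => (Quaternion.coe_commute y _).symm

/-! the element y + ε s -/

def mk2 (y : ℝ) (s : Quat) : DH := inl ((y : Quat)) + inr s

@[simp] lemma fst_mk2 (y : ℝ) (s : Quat) : fst (mk2 y s) = (y : Quat) := by
  simp [mk2]

@[simp] lemma snd_mk2 (y : ℝ) (s : Quat) : snd (mk2 y s) = s := by
  simp [mk2]

lemma mk2_eta (h : DH) (y : ℝ) (hy : fst h = (y : Quat)) : h = mk2 y (snd h) := by
  rw [mk2, ← hy, inl_fst_add_inr_snd_eq]

lemma fst_pow_mk2 (y : ℝ) (s : Quat) (n : ℕ) :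
    fst (mk2 y s ^ n) = ((y : Quat)) ^ n := by
  rw [fst_pow, fst_mk2]

lemma snd_pow_mk2 (y : ℝ) (s : Quat) (n : ℕ) :
    snd (mk2 y s ^ n) = ((n : ℝ) * y ^ (n - 1)) • s := by
  rw [snd_pow_of_smul_comm]
  · rw [fst_mk2, snd_mk2]
    show (n : ℕ) • (((y:Quat)) ^ (n-1) * s) = _
    rw [← Quaternion.coe_pow, Quaternion.coe_mul_eq_smul, mul_smul,
      Nat.cast_smul_eq_nsmul]
  · rw [fst_mk2, snd_mk2]
    show s * (y : Quat) = ((y:Quat)) * s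
    exact ((Quaternion.coe_commute y s).eq).symm

lemma fst_calg (y : ℝ) : fst (algebraMap ℝ DH y) = (y : Quat) := by
  rw [TrivSqZeroExt.algebraMap_eq_inl', fst_inl, Quaternion.algebraMap_def]

lemma snd_calg_pow (y : ℝ) (n : ℕ) : snd ((algebraMap ℝ DH y) ^ n) = 0 := by
  rw [TrivSqZeroExt.algebraMap_eq_inl', inl_pow, snd_inl]

lemma fst_calg_pow (y : ℝ) (n : ℕ) : fst ((algebraMap ℝ DH y) ^ n) = ((y : Quat)) ^ n := by
  rw [fst_pow, fst_calg]

lemma pprimal_add (p q : Polynomial DH) : pprimal (p + q) = pprimal p + pprimal q :=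
  Polynomial.map_add _

lemma pprimal_monomial (n : ℕ) (a : DH) :
    pprimal (monomial n a) = monomial n (fst a) :=
  map_monomial _

lemma evalR_mk2 (y : ℝ) (s : Quat) (P : Polynomial DH) :
    evalR (mk2 y s) P =
      eval₂ (RingHom.id DH) (algebraMap ℝ DH y) P
        + inr (s * eval₂ (RingHom.id Quat) ((y : Quat)) (derivative (pprimal P))) := by
  induction P using Polynomial.induction_on' with
  | add p q hp hq =>
    rw [evalR_add, hp, hq, eval₂_add, pprimal_add, derivative_add, eval₂_add,
      mul_add, TrivSqZeroExt.inr_add, add_add_add_comm]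
  | monomial n a =>
    rw [evalR_monomial, eval₂_monomial, RingHom.id_apply, pprimal_monomial,
      derivative_monomial, eval₂_monomial, RingHom.id_apply]
    refine TrivSqZeroExt.ext ?_ ?_
    · rw [fst_mul, fst_add, fst_mul, fst_pow_mk2, fst_inr, add_zero, fst_calg_pow]
      exact ((Quaternion.coe_commute y _).pow_left n).eq
    · rw [snd_mul, snd_add, snd_mul, snd_inr, snd_pow_mk2, fst_pow_mk2, fst_calg_pow,
        snd_calg_pow]
      simp only [MulOpposite.smul_eq_mul_unop, MulOpposite.unop_op, smul_zero, zero_add, smul_eq_mul,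
        smul_mul_assoc, ← Quaternion.coe_pow, ← Quaternion.coe_natCast,
        Quaternion.mul_coe_eq_smul, Quaternion.coe_mul_eq_smul, mul_smul_comm, smul_smul, mul_zero, zero_add]

@[simp] lemma fst_dconj (h : DH) : fst (dconj h) = star (fst h) := rfl
@[simp] lemma snd_dconj (h : DH) : snd (dconj h) = star (snd h) := rfl

lemma dconj_add (u v : DH) : dconj (u + v) = dconj u + dconj v := by
  refine TrivSqZeroExt.ext ?_ ?_ <;> simp [fst_add, snd_add]

lemma dconj_mul (u v : DH) : dconj (u * v) = dconj v * dconj u := by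
  refine TrivSqZeroExt.ext ?_ ?_
  · simp [fst_mul, star_mul]
  · simp [snd_mul, smul_eq_mul, MulOpposite.smul_eq_mul_unop, star_add, star_mul, add_comm]

lemma dconj_zero : dconj 0 = 0 := by
  refine TrivSqZeroExt.ext ?_ ?_ <;> simp

lemma dconj_calg (y : ℝ) : dconj (algebraMap ℝ DH y) = algebraMap ℝ DH y := by
  refine TrivSqZeroExt.ext ?_ ?_ <;>
    simp [TrivSqZeroExt.algebraMap_eq_inl', Quaternion.algebraMap_def, Quaternion.star_coe]

lemma dconj_natCast (n : ℕ) : dconj (n : DH) = (n : DH) := by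
  refine TrivSqZeroExt.ext ?_ ?_ <;> simp [fst_natCast, snd_natCast]

lemma dconj_calg_pow (y : ℝ) (n : ℕ) :
    dconj ((algebraMap ℝ DH y) ^ n) = (algebraMap ℝ DH y) ^ n := by
  rw [← map_pow, dconj_calg]

lemma pconj_add (p q : Polynomial DH) : pconj (p + q) = pconj p + pconj q := by
  unfold pconj
  rw [Polynomial.sum_add_index _ _ _ (fun _ => by rw [dconj_zero, Polynomial.C_0, zero_mul])
    (fun a b c => by rw [dconj_add, Polynomial.C_add, add_mul])]

lemma pconj_monomial (n : ℕ) (a : DH) :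
    pconj (monomial n a) = monomial n (dconj a) := by
  unfold pconj
  rw [Polynomial.sum_monomial_index _ _ (by rw [dconj_zero, Polynomial.C_0, zero_mul]),
    C_mul_X_pow_eq_monomial]

/-! evaluation ring homs at a central real point -/

def evQ (y : ℝ) : Polynomial Quat →+* Quat :=
  eval₂RingHom' (RingHom.id Quat) ((y : Quat)) (fun a => (Quaternion.coe_commute y a).symm)

def evD (y : ℝ) : Polynomial DH →+* DH :=
  eval₂RingHom' (RingHom.id DH) (algebraMap ℝ DH y) (fun a => (Algebra.commutes y a).symm)

lemma evQ_apply (y : ℝ) (Q : Polynomial Quat) :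
    evQ y Q = eval₂ (RingHom.id Quat) ((y : Quat)) Q := rfl

lemma evD_apply (y : ℝ) (Q : Polynomial DH) :
    evD y Q = eval₂ (RingHom.id DH) (algebraMap ℝ DH y) Q := rfl

lemma evD_pconj (y : ℝ) (Q : Polynomial DH) :
    evD y (pconj Q) = dconj (evD y Q) := by
  induction Q using Polynomial.induction_on' with
  | add p q hp hq =>
    rw [pconj_add, RingHom.map_add, hp, hq, RingHom.map_add, dconj_add]
  | monomial n a =>
    rw [pconj_monomial, evD_apply, evD_apply, eval₂_monomial, eval₂_monomial,
      RingHom.id_apply, RingHom.id_apply, dconj_mul, dconj_calg_pow]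
    have hcomm : Commute (algebraMap ℝ DH y) (dconj a) := Algebra.commutes y (dconj a)
    exact (hcomm.symm.pow_right n).eq

lemma pconj_derivative (P : Polynomial DH) :
    derivative (pconj P) = pconj (derivative P) := by
  induction P using Polynomial.induction_on' with
  | add p q hp hq => rw [pconj_add, derivative_add, hp, hq, derivative_add, pconj_add]
  | monomial n a =>
    rw [pconj_monomial, derivative_monomial, derivative_monomial, pconj_monomial,
      dconj_mul, dconj_natCast]
    congr 1
    exact (Nat.commute_cast (dconj a) n).eq

lemma pprimal_derivative (P : Polynomial DH) :
    pprimal (derivative P) = derivative (pprimal P) :=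
  (derivative_map P _).symm

lemma fst_evD (y : ℝ) (Q : Polynomial DH) :
    fst (evD y Q) = evQ y (pprimal Q) := by
  rw [evD_apply, evQ_apply, pprimal]
  have h := hom_eval₂ Q (RingHom.id DH) (fstHom ℝ Quat Quat).toRingHom (algebraMap ℝ DH y)
  have h2 : (fstHom ℝ Quat Quat).toRingHom (algebraMap ℝ DH y) = ((y : Quat)) := fst_calg y
  rw [h2] at h
  rw [show (fst (eval₂ (RingHom.id DH) (algebraMap ℝ DH y) Q) : Quat)
      = (fstHom ℝ Quat Quat).toRingHom (eval₂ (RingHom.id DH) (algebraMap ℝ DH y) Q) from rfl,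
    h, eval₂_map]
  congr 1

lemma evQ_X_sub_C (y : ℝ) : evQ y (X - C ((y : Quat))) = 0 := by
  rw [map_sub, evQ_apply, evQ_apply, eval₂_X, eval₂_C, RingHom.id_apply, sub_self]

lemma evD_X_sub_C (y : ℝ) : evD y (X - C (algebraMap ℝ DH y)) = 0 := by
  rw [map_sub, evD_apply, evD_apply, eval₂_X, eval₂_C, RingHom.id_apply, sub_self]

lemma evQ_pprimal_zero (y : ℝ) (P : Polynomial DH)
    (h1 : (X - C ((y : Quat))) ∣ pprimal P) : evQ y (pprimal P) = 0 := by
  obtain ⟨W, hW⟩ := h1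
  rw [hW, map_mul, evQ_X_sub_C, zero_mul]

lemma deriv_ne_zero (y : ℝ) (P : Polynomial DH)
    (h1 : (X - C ((y : Quat))) ∣ pprimal P)
    (h2 : ¬ (X - C ((y : Quat))) ^ 2 ∣ pprimal P) :
    evQ y (derivative (pprimal P)) ≠ 0 := by
  obtain ⟨W, hW⟩ := h1
  intro hp
  apply h2
  have hd : derivative (pprimal P) = W + (X - C ((y : Quat))) * derivative W := by
    rw [hW, derivative_mul, derivative_sub, derivative_X, derivative_C, sub_zero, one_mul]
  rw [hd, map_add, map_mul, evQ_X_sub_C, zero_mul, add_zero] at hp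
  obtain ⟨V, hV⟩ := ev_root y W (by rw [← evQ_apply]; exact hp)
  exact ⟨V, by rw [hW, hV, sq, mul_assoc]⟩

lemma orth_key (y : ℝ) (P : Polynomial DH)
    (hN : (X - C (algebraMap ℝ DH y)) ^ 2 ∣ P * pconj P)
    (hroot : evQ y (pprimal P) = 0) :
    evQ y (derivative (pprimal P)) * star (snd (evD y P))
      + snd (evD y P) * star (evQ y (derivative (pprimal P))) = 0 := by
  obtain ⟨S, hS⟩ := hN
  have hDN : evD y (derivative (P * pconj P)) = 0 := by
    rw [hS, sq, mul_assoc, derivative_mul, map_add, map_mul, map_mul, evD_X_sub_C,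
      zero_mul, mul_zero, zero_add, map_mul, evD_X_sub_C, zero_mul]
  rw [derivative_mul, map_add, map_mul, map_mul, pconj_derivative, evD_pconj,
    evD_pconj] at hDN
  have hsnd := congrArg TrivSqZeroExt.snd hDN
  rw [snd_add, snd_mul, snd_mul] at hsnd
  have hfst : fst (evD y P) = 0 := by rw [fst_evD, hroot]
  have hfd : fst (evD y (derivative P)) = evQ y (derivative (pprimal P)) := by
    rw [fst_evD, pprimal_derivative]
  simp only [fst_dconj, snd_dconj, smul_eq_mul, MulOpposite.smul_eq_mul_unop,
    MulOpposite.unop_op, hfst, hfd, star_zero, mul_zero, zero_mul, add_zero, zero_add,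
    snd_zero] at hsnd
  linear_combination (norm := noncomm_ring) hsnd

lemma re_zero (p d s : Quat) (hp : p ≠ 0)
    (horth : p * star d + d * star p = 0) (hs : d + s * p = 0) : s.re = 0 := by
  have hd : d = -(s * p) := eq_neg_of_add_eq_zero_left hs
  rw [hd] at horth
  rw [star_neg, star_mul, mul_neg, ← mul_assoc, Quaternion.self_mul_star, neg_mul,
    mul_assoc, Quaternion.self_mul_star, Quaternion.mul_coe_eq_smul,
    Quaternion.coe_mul_eq_smul, ← neg_add, ← smul_add, neg_eq_zero, smul_eq_zero] at horth
  rcases horth with hN | hsum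
  · exact absurd hp (by simpa using (Quaternion.normSq_eq_zero).1 hN)
  · have h2 : star s + s = 0 := hsum
    rw [Quaternion.star_add_self'] at h2
    have : (2 : ℝ) * s.re = 0 := by
      have := congrArg QuaternionAlgebra.re h2
      simpa [Quaternion.re_zero] using this
    linarith

lemma evalR_mk2_zero_iff (y : ℝ) (s : Quat) (P : Polynomial DH) :
    evalR (mk2 y s) P = 0 ↔
      evQ y (pprimal P) = 0 ∧
        snd (evD y P) + s * evQ y (derivative (pprimal P)) = 0 := by
  rw [evalR_mk2, ← evD_apply, ← evQ_apply]
  constructor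
  · intro h
    have hf := congrArg TrivSqZeroExt.fst h
    have hs := congrArg TrivSqZeroExt.snd h
    rw [fst_add, fst_inr, add_zero, fst_zero, fst_evD] at hf
    rw [snd_add, snd_inr, snd_zero] at hs
    exact ⟨hf, hs⟩
  · rintro ⟨hf, hs⟩
    refine TrivSqZeroExt.ext ?_ ?_
    · rw [fst_add, fst_inr, add_zero, fst_zero, fst_evD]; exact hf
    · rw [snd_add, snd_inr, snd_zero]; exact hs

end Stmt17Aux

open Stmt17Aux

/-- if (t-y₁)² divides N(P) and y₁ ∈ ℝ is a simple root of primal(P),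
then P has a unique root h in y₁ + εℍ; moreover h ∈ y₁ + ε·Im ℍ and (t-h) divides P
on the left. -/
theorem stmt17 (P : Polynomial DH) (y₁ : ℝ)
    (hN : (X - C (algebraMap ℝ DH y₁)) ^ 2 ∣ P * pconj P)
    (h1 : (X - C ((y₁ : ℝ) : Quat)) ∣ pprimal P)
    (h2 : ¬ (X - C ((y₁ : ℝ) : Quat)) ^ 2 ∣ pprimal P) :
    (∃! h : DH, h.fst = ((y₁ : ℝ) : Quat) ∧ evalR h P = 0) ∧
    (∀ h : DH, h.fst = ((y₁ : ℝ) : Quat) → evalR h P = 0 →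
      h.snd.re = 0 ∧ ∃ Q : Polynomial DH, P = (X - C h) * Q) := by
  have hroot : evQ y₁ (pprimal P) = 0 := evQ_pprimal_zero _ _ h1
  have hp : evQ y₁ (derivative (pprimal P)) ≠ 0 := deriv_ne_zero _ _ h1 h2
  set p : Quat := evQ y₁ (derivative (pprimal P)) with hpdef
  set d : Quat := TrivSqZeroExt.snd (evD y₁ P) with hddef
  have horth : p * star d + d * star p = 0 := orth_key y₁ P hN hroot
  constructor
  · refine ⟨mk2 y₁ (-(d * p⁻¹)), ⟨fst_mk2 _ _, ?_⟩, ?_⟩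
    · rw [evalR_mk2_zero_iff]
      refine ⟨hroot, ?_⟩
      rw [neg_mul, mul_assoc, inv_mul_cancel₀ hp, mul_one, add_neg_cancel]
    · rintro h ⟨hfst, hzero⟩
      have hh := mk2_eta h y₁ hfst
      rw [hh] at hzero
      obtain ⟨-, hs⟩ := (evalR_mk2_zero_iff _ _ _).1 hzero
      have hsnd : TrivSqZeroExt.snd h = -(d * p⁻¹) := by
        have hmul : TrivSqZeroExt.snd h * p = -d := eq_neg_of_add_eq_zero_right hs
        rw [← neg_mul]
        exact (eq_mul_inv_iff_mul_eq₀ hp).2 hmul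
      rw [hh, hsnd]
  · intro h hfst hzero
    have hh := mk2_eta h y₁ hfst
    have hzero' := hzero
    rw [hh] at hzero'
    obtain ⟨-, hs⟩ := (evalR_mk2_zero_iff _ _ _).1 hzero'
    constructor
    · exact re_zero p d _ hp horth hs
    · exact root_factor h P hzero
end
end

section
/- Let P(t) ∈ 𝔻ℍ[t], y₁ ∈ ℝ, and suppose Δ_{y₁}(t) = (t - y₁)² divides primal(P)(t). Write P(t) = (t - y₁)²·Q(t) + R(t) with deg R ≤ 1 and suppose R(t) = t·εa₂ + εb₂ with a₂ ∈ ℍ\{0}. Then the set of common zeros of (t - y₁)² and P(t) is either all of y₁ + εℍ (precisely when -b₂a₂⁻¹ = y₁, in which case t - h divides P(t) on the left for every h ∈ y₁ + εℍ) or empty (when -b₂a₂⁻¹ ≠ y₁). -/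
noncomputable section
open Polynomial TrivSqZeroExt

/-- ε·q, the dual quaternion with zero primal part and dual part q. -/
def epsMul (q : Quat) : DH := ((0 : Quat), q)

lemma epsMul_eq_inr (q : Quat) : epsMul q = TrivSqZeroExt.inr q := rfl

lemma epsMul_mul_epsMul (x y : Quat) : epsMul x * epsMul y = 0 := by
  ext1 <;> simp [epsMul_eq_inr]

lemma epsMul_add (x y : Quat) : epsMul (x + y) = epsMul x + epsMul y := by
  ext1 <;> simp [epsMul_eq_inr]

lemma epsMul_eq_zero_iff (x : Quat) : epsMul x = 0 ↔ x = 0 := by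
  constructor
  · intro hx; have := congrArg TrivSqZeroExt.snd hx; simpa [epsMul] using this
  · rintro rfl; ext1 <;> simp [epsMul_eq_inr]

lemma algebraMap_mul_epsMul (r : ℝ) (x : Quat) :
    algebraMap ℝ DH r * epsMul x = epsMul ((r : Quat) * x) := by
  ext1 <;> simp [epsMul_eq_inr, TrivSqZeroExt.algebraMap_eq_inl']

lemma epsMul_mul_algebraMap (r : ℝ) (x : Quat) :
    epsMul x * algebraMap ℝ DH r = epsMul ((r : Quat) * x) := by
  ext1 <;> simp [epsMul_eq_inr, TrivSqZeroExt.algebraMap_eq_inl', Quaternion.coe_mul_eq_smul,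
    Quaternion.mul_coe_eq_smul]

lemma eq_add_epsMul (h : DH) (y₁ : ℝ) (hf : h.fst = ((y₁:ℝ):Quat)) :
    h = algebraMap ℝ DH y₁ + epsMul h.snd := by
  ext1 <;> simp [epsMul_eq_inr, TrivSqZeroExt.algebraMap_eq_inl', hf]

lemma evalR_add (h : DH) (p q : Polynomial DH) :
    evalR h (p + q) = evalR h p + evalR h q := by
  unfold evalR
  exact Polynomial.sum_add_index p q _ (fun n => mul_zero _) (fun n a b => mul_add _ _ _)

lemma evalR_monomial (h : DH) (n : ℕ) (a : DH) :
    evalR h (monomial n a) = h ^ n * a := by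
  unfold evalR
  exact Polynomial.sum_monomial_index a _ (mul_zero _)

lemma evalR_C (h : DH) (a : DH) : evalR h (C a) = a := by
  rw [← monomial_zero_left, evalR_monomial]; simp

lemma evalR_X_sub_C_mul (h : DH) (S : Polynomial DH) :
    evalR h ((X - C h) * S) = 0 := by
  induction S using Polynomial.induction_on' with
  | add p q hp hq => rw [mul_add, evalR_add, hp, hq, add_zero]
  | monomial n a =>
    have h1 : (X - C h) * monomial n a = monomial (n+1) a + monomial n (-(h*a)) := by
      rw [sub_mul, X_mul_monomial, C_mul_monomial, sub_eq_add_neg, ← monomial_neg]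
    rw [h1, evalR_add, evalR_monomial, evalR_monomial, pow_succ, mul_assoc, mul_neg,
      add_neg_cancel]

/-- if Δ_{y₁} = (t-y₁)² (y₁ ∈ ℝ) divides primal(P) and the remainder of
P modulo (t-y₁)² is R(t) = t·εa₂ + εb₂ with a₂ ≠ 0, then the set of common zeros of
(t-y₁)² and P is either all of y₁ + εℍ (exactly when -b₂a₂⁻¹ = y₁, in which case
(t-h) left-divides P for every h ∈ y₁ + εℍ) or empty (when -b₂a₂⁻¹ ≠ y₁). -/
theorem stmt19 (P Q R : Polynomial DH) (y₁ : ℝ) (a₂ b₂ : Quat) (ha₂ : a₂ ≠ 0)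
    (hΔ : (X - C ((y₁ : ℝ) : Quat)) ^ 2 ∣ pprimal P)
    (hPQR : P = (X - C (algebraMap ℝ DH y₁)) ^ 2 * Q + R)
    (hR : R = X * C (epsMul a₂) + C (epsMul b₂)) :
    (-b₂ * a₂⁻¹ = ((y₁ : ℝ) : Quat) →
      ∀ h : DH, h.fst = ((y₁ : ℝ) : Quat) →
        evalR h P = 0 ∧ ∃ S : Polynomial DH, P = (X - C h) * S) ∧
    (-b₂ * a₂⁻¹ ≠ ((y₁ : ℝ) : Quat) →
      ∀ h : DH, h.fst = ((y₁ : ℝ) : Quat) → evalR h P ≠ 0) := by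
  have key : ∀ h : DH, h.fst = ((y₁ : ℝ) : Quat) → ∃ S : Polynomial DH,
      P = (X - C h) * S + C (epsMul (((y₁ : ℝ) : Quat) * a₂ + b₂)) := by
    intro h hf
    set A : Polynomial DH := X - C (algebraMap ℝ DH y₁) with hA
    set E : Polynomial DH := C (epsMul h.snd) with hE
    refine ⟨A * Q + C (epsMul a₂) + E * Q, ?_⟩
    have hCh : (C h : Polynomial DH) = C (algebraMap ℝ DH y₁) + E := by
      rw [hE, ← C_add, ← eq_add_epsMul h y₁ hf]
    have hXh : X - C h = A - E := by rw [hCh, hA, sub_add_eq_sub_sub]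
    have hEA : E * A = A * E := by
      simp only [hA, hE, mul_sub, sub_mul, ← C_mul, algebraMap_mul_epsMul,
        epsMul_mul_algebraMap, X_mul]
    have hEE : E * E = 0 := by rw [hE, ← C_mul, epsMul_mul_epsMul, C_0]
    have hEa : E * C (epsMul a₂) = 0 := by rw [hE, ← C_mul, epsMul_mul_epsMul, C_0]
    have expand : (A - E) * (A * Q + C (epsMul a₂) + E * Q) = A * A * Q + A * C (epsMul a₂) := by
      have h1 : E * (A * Q + C (epsMul a₂) + E * Q) = A * (E * Q) := by
        rw [mul_add, mul_add, hEa, ← mul_assoc, ← mul_assoc, hEE, hEA, zero_mul, add_zero,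
          add_zero, mul_assoc]
      rw [sub_mul, h1, mul_add, mul_add, mul_assoc]
      abel
    have hACa : A * C (epsMul a₂) = X * C (epsMul a₂) - C (epsMul (((y₁:ℝ):Quat) * a₂)) := by
      rw [hA, sub_mul, ← C_mul, algebraMap_mul_epsMul]
    rw [hPQR, hR, hXh, expand, hACa, epsMul_add, C_add, pow_two]
    abel
  have hEval : ∀ h : DH, h.fst = ((y₁ : ℝ) : Quat) →
      evalR h P = epsMul (((y₁ : ℝ) : Quat) * a₂ + b₂) := by
    intro h hf
    obtain ⟨S, hS⟩ := key h hf
    rw [hS, evalR_add, evalR_X_sub_C_mul, evalR_C, zero_add]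
  have hiff : (-b₂ * a₂⁻¹ = ((y₁ : ℝ) : Quat)) ↔ (((y₁ : ℝ) : Quat) * a₂ + b₂ = 0) := by
    constructor
    · intro hc
      have : ((y₁ : ℝ) : Quat) * a₂ = -b₂ := by
        rw [← hc, mul_assoc, inv_mul_cancel₀ ha₂, mul_one]
      rw [this, neg_add_cancel]
    · intro hc
      have hb : ((y₁ : ℝ) : Quat) * a₂ = -b₂ := eq_neg_of_add_eq_zero_left hc
      rw [← hb, mul_assoc, mul_inv_cancel₀ ha₂, mul_one]
  constructor
  · intro hc h hf
    have hc0 : ((y₁ : ℝ) : Quat) * a₂ + b₂ = 0 := hiff.mp hc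
    obtain ⟨S, hS⟩ := key h hf
    refine ⟨?_, S, ?_⟩
    · rw [hEval h hf, hc0, (epsMul_eq_zero_iff 0).mpr rfl]
    · rw [hS, hc0, (epsMul_eq_zero_iff 0).mpr rfl, C_0, add_zero]
  · intro hc h hf h0
    rw [hEval h hf, epsMul_eq_zero_iff] at h0
    exact hc (hiff.mpr h0)
end
end
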